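/- The number of well-labeled plane rooted trees with n edges and root label 0 is 3^n/(2n+1) · C(2n+1, n), and the number of well-labeled plane forests with m trees, n edges, and prescribed root labels (all roots labeled 0, say) is 3^n · m/(2n+m) · C(2n+m, n). -/

import Mathlib

-- A plane rooted tree with integer increments on edges: a tree is a node together
-- with the (ordered) forest of its subtrees, each subtree carrying the label increment
-- of the edge to its root.
mutual
  inductive PTree : Type where
    | node : PForest → PTree
  inductive PForest : Type where
    | nil : PForest
    | cons : ℤ → PTree → PForest → PForest
end

mutual
  def PTree.edges : PTree → ℕ
    | .node f => PForest.edges f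
  def PForest.edges : PForest → ℕ
    | .nil => 0
    | .cons _ t f => 1 + PTree.edges t + PForest.edges f
end

-- A labeled tree is well-labeled when every edge increment lies in `{-1,0,1}`.
mutual
  def PTree.ok : PTree → Prop
    | .node f => PForest.ok f
  def PForest.ok : PForest → Prop
    | .nil => True
    | .cons i t f => (i = -1 ∨ i = 0 ∨ i = 1) ∧ PTree.ok t ∧ PForest.ok f
end


/-!
Decompose a forest at its first tree. Either that tree is a single vertex, and removing it
leaves a forest with one tree fewer; or its root has a first edge, carrying one of three
increments, and cutting that edge splits the first tree into two trees, giving a forest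
with one tree more and one edge fewer. Hence the number `F m n` of forests of `m` trees
with `n` edges satisfies `F (k+1) (n+1) = F k (n+1) + 3 F (k+2) n`, with `F m 0 = 1` and
`F 0 (n+1) = 0`, and the closed form `3^n m/(2n+m) C(2n+m, n)` satisfies the same recurrence
by Pascal's rule. Trees are forests with `m = 1`.
-/

theorem mul_eq_ballot_of_recurrence (c : ℕ) (F : ℕ → ℕ → ℕ) (h_zero : ∀ m, F m 0 = 1)
    (h_empty : ∀ n, F 0 (n + 1) = 0)
    (h_succ : ∀ k n, F (k + 1) (n + 1) = F k (n + 1) + c * F (k + 2) n) (n m : ℕ) :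
    (2 * n + m) * F m n = c ^ n * m * (2 * n + m).choose n := by
  induction n generalizing m with
  | zero => simp [h_zero]
  | succ n ihn =>
    induction m with
    | zero => simp [h_empty]
    | succ k ihk =>
      have hA := ihk
      have hB := ihn (k + 2)
      rw [show 2 * (n + 1) + k = 2 * n + k + 2 by ring] at hA
      rw [show 2 * n + (k + 2) = 2 * n + k + 2 by ring] at hB
      have pascal : (2 * (n + 1) + (k + 1)).choose (n + 1)
          = (2 * n + k + 2).choose n + (2 * n + k + 2).choose (n + 1) := by
        rw [show 2 * (n + 1) + (k + 1) = 2 * n + k + 2 + 1 by ring, Nat.choose_succ_succ]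
      have choose_succ : (2 * n + k + 2).choose (n + 1) * (n + 1)
          = (2 * n + k + 2).choose n * (n + k + 2) := by
        have := Nat.choose_succ_right_eq (2 * n + k + 2) n
        rwa [show 2 * n + k + 2 - n = n + k + 2 by omega] at this
      -- After multiplying by `2n+k+2`, the step is linear in the two induction hypotheses.
      rw [h_succ, pascal]
      apply Nat.eq_of_mul_eq_mul_left (show 0 < 2 * n + k + 2 by omega)
      zify at hA hB choose_succ ⊢
      linear_combination ((2 : ℤ) * n + k + 3) * hA + c * ((2 : ℤ) * n + k + 3) * hB
        - 2 * c ^ (n + 1) * choose_succ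

abbrev WellLabeledForest (m n : ℕ) : Type :=
  {l : List PTree // l.length = m ∧ (∀ t ∈ l, t.ok) ∧ (l.map PTree.edges).sum = n}

abbrev Increment : Type := {i : ℤ // i = -1 ∨ i = 0 ∨ i = 1}

lemma Nat.card_increment : Nat.card Increment = 3 := by
  rw [Nat.card_congr (Equiv.subtypeEquivRight (q := (· ∈ ({-1, 0, 1} : Finset ℤ)))
    (fun i => by simp)), Nat.card_eq_fintype_card, Fintype.card_coe]
  decide

instance : Finite Increment := Nat.finite_of_card_ne_zero (by simp [Nat.card_increment])

lemma PTree.eq_node_nil_of_edges_eq_zero : ∀ {t : PTree}, t.edges = 0 → t = .node .nil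
  | .node .nil, _ => rfl
  | .node (.cons _ _ _), h => by simp [PTree.edges, PForest.edges] at h

namespace WellLabeledForest

instance instUnique (m : ℕ) : Unique (WellLabeledForest m 0) where
  default := ⟨List.replicate m (.node .nil), by
    simp [List.map_replicate, PTree.edges, PForest.edges, PTree.ok, PForest.ok]⟩
  uniq := by
    rintro ⟨l, hlen, -, hsum⟩
    refine Subtype.ext (List.eq_replicate_iff.mpr ⟨hlen, fun t ht => ?_⟩)
    exact PTree.eq_node_nil_of_edges_eq_zero
      (List.sum_eq_zero_iff.mp hsum _ (List.mem_map_of_mem ht))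

instance instIsEmpty (n : ℕ) : IsEmpty (WellLabeledForest 0 (n + 1)) :=
  ⟨fun ⟨l, hlen, _, hsum⟩ => by simp [List.length_eq_zero_iff.mp hlen] at hsum⟩

def glue (k n : ℕ) :
    WellLabeledForest k (n + 1) ⊕ Increment × WellLabeledForest (k + 2) n →
      WellLabeledForest (k + 1) (n + 1)
  | .inl ⟨l, h⟩ =>
      ⟨.node .nil :: l, by simp_all [PTree.edges, PForest.edges, PTree.ok, PForest.ok]⟩
  | .inr ⟨⟨i, hi⟩, ⟨t :: .node f :: l, h⟩⟩ =>
      ⟨.node (.cons i t f) :: l, by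
        obtain ⟨hlen, hok, hsum⟩ := h
        simp only [List.mem_cons, forall_eq_or_imp, List.length_cons, List.map_cons,
          List.sum_cons, PTree.edges, PForest.edges, PTree.ok, PForest.ok] at hlen hok hsum ⊢
        exact ⟨by omega, ⟨⟨hi, hok.1, hok.2.1⟩, hok.2.2⟩, by omega⟩⟩

def split (k n : ℕ) :
    WellLabeledForest (k + 1) (n + 1) →
      WellLabeledForest k (n + 1) ⊕ Increment × WellLabeledForest (k + 2) n
  | ⟨.node .nil :: l, h⟩ =>
      .inl ⟨l, by simp_all [PTree.edges, PForest.edges]⟩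
  | ⟨.node (.cons i t f) :: l, h⟩ =>
      .inr ⟨⟨i, by simp_all [PTree.ok, PForest.ok]⟩, ⟨t :: .node f :: l, by
        obtain ⟨hlen, hok, hsum⟩ := h
        simp only [List.mem_cons, forall_eq_or_imp, List.length_cons, List.map_cons,
          List.sum_cons, PTree.edges, PForest.edges, PTree.ok, PForest.ok] at hlen hok hsum ⊢
        exact ⟨by omega, ⟨hok.1.2.1, hok.1.2.2, hok.2⟩, by omega⟩⟩⟩

def splitEquiv (k n : ℕ) :
    WellLabeledForest (k + 1) (n + 1) ≃
      WellLabeledForest k (n + 1) ⊕ Increment × WellLabeledForest (k + 2) n where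
  toFun := split k n
  invFun := glue k n
  left_inv := by
    rintro ⟨_ | ⟨⟨_ | ⟨_, _, _⟩⟩, _⟩, h⟩
    · simp at h
    all_goals rfl
  right_inv := by
    rintro (_ | ⟨_, ⟨_ | ⟨_, _ | ⟨⟨⟩, _⟩⟩, h⟩⟩)
    all_goals first | rfl | simp at h

instance instFinite : ∀ m n, Finite (WellLabeledForest m n)
  | _, 0 => inferInstance
  | 0, _ + 1 => inferInstance
  | k + 1, n + 1 =>
    have := instFinite k (n + 1)
    have := instFinite (k + 2) n
    .of_equiv _ (splitEquiv k n).symm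

lemma card_succ_succ (k n : ℕ) :
    Nat.card (WellLabeledForest (k + 1) (n + 1)) =
      Nat.card (WellLabeledForest k (n + 1)) + 3 * Nat.card (WellLabeledForest (k + 2) n) := by
  rw [Nat.card_congr (splitEquiv k n), Nat.card_sum, Nat.card_prod, Nat.card_increment]

theorem mul_card_eq (m n : ℕ) :
    (2 * n + m) * Nat.card (WellLabeledForest m n) = 3 ^ n * m * (2 * n + m).choose n :=
  mul_eq_ballot_of_recurrence 3 (fun m n => Nat.card (WellLabeledForest m n))
    (fun _ => Nat.card_unique) (fun _ => Nat.card_of_isEmpty) card_succ_succ n m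

end WellLabeledForest

def PTree.equivWellLabeledForestOne (n : ℕ) :
    {t : PTree // t.ok ∧ t.edges = n} ≃ WellLabeledForest 1 n where
  toFun t := ⟨[t.1], by simp [t.2.1, t.2.2]⟩
  invFun l := ⟨l.1.head (List.ne_nil_of_length_eq_add_one l.2.1), by
    obtain ⟨l, hlen, hok, hsum⟩ := l
    obtain ⟨t, rfl⟩ := List.length_eq_one_iff.mp hlen
    exact ⟨by simpa using hok, by simpa using hsum⟩⟩
  left_inv _ := rfl
  right_inv := by
    rintro ⟨l, hlen, -⟩
    obtain ⟨t, rfl⟩ := List.length_eq_one_iff.mp hlen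
    rfl

/-- The number of well-labeled plane rooted trees with `n` edges (root label fixed, say
to `0`) is `3^n/(2n+1)·C(2n+1,n)`, and the number of well-labeled plane forests with
`m ≥ 1` trees, `n` edges and prescribed root labels (all roots labeled `0`) is
`3^n·m/(2n+m)·C(2n+m,n)`. -/
theorem stmt_14 :
    (∀ n : ℕ,
      (2 * n + 1) * Nat.card {t : PTree // t.ok ∧ t.edges = n}
        = 3 ^ n * Nat.choose (2 * n + 1) n) ∧
    (∀ n m : ℕ, 1 ≤ m →
      (2 * n + m) * Nat.card
          {l : List PTree // l.length = m ∧ (∀ t ∈ l, t.ok) ∧ (l.map PTree.edges).sum = n}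
        = 3 ^ n * m * Nat.choose (2 * n + m) n) := by
  refine ⟨fun n => ?_, fun n m _ => WellLabeledForest.mul_card_eq m n⟩
  simpa [Nat.card_congr (PTree.equivWellLabeledForestOne n)] using
    WellLabeledForest.mul_card_eq 1 n
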